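/- arXiv:math/0008095 — 7 statements merged into one kernel-verified Lean document; each statement's English description precedes it below -/
import Mathlib

section
/- Let d be a C₀-translation invariant metric on an abelian group E. Then for every x,y ∈ E the limit δ(x,y) = lim_{n→∞} d(n•x, n•y)/n exists, and δ(x,y) ≤ d(x,y) + 2C₀. -/
open Filter Topology

-- `u + C` is subadditive, so Fekete's lemma applies to it.
theorem exists_tendsto_div_of_add_le_add_add_const {u : ℕ → ℝ} {C : ℝ}
    (hu : ∀ m n, u (m + n) ≤ u m + u n + C) (hbdd : BddBelow (Set.range fun n => u n / n)) :
    ∃ L, Tendsto (fun n : ℕ => u n / n) atTop (𝓝 L) ∧ L ≤ u 1 + C := by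
  set v : ℕ → ℝ := fun n => u n + C
  have hv : Subadditive v := fun m n => by simp only [v]; linarith [hu m n]
  have hvbdd : BddBelow (Set.range fun n => v n / n) := by
    obtain ⟨b, hb⟩ := hbdd
    refine ⟨b - |C|, ?_⟩
    rintro _ ⟨n, rfl⟩
    have hun : b ≤ u n / n := hb ⟨n, rfl⟩
    have hCn : -|C| ≤ C / n := by
      rcases Nat.eq_zero_or_pos n with rfl | hn
      · simp
      · have : |C / n| ≤ |C| := by
          rw [abs_div, Nat.abs_cast]
          exact div_le_self (abs_nonneg C) (by exact_mod_cast hn)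
        linarith [neg_abs_le (C / n)]
    simp only [v, add_div]
    linarith
  refine ⟨hv.lim, ?_, ?_⟩
  · have h := (hv.tendsto_lim hvbdd).sub (tendsto_const_div_atTop_nhds_zero_nat C)
    rw [sub_zero] at h
    refine h.congr fun n => ?_
    simp only [v, add_div, add_sub_cancel_right]
  · simpa [v] using hv.lim_le_div hvbdd one_ne_zero

theorem dist_add_add_le_of_add_right_le {E : Type*} [AddCommGroup E] {d : E → E → ℝ} {C₀ : ℝ}
    (htri : ∀ x y z, d x z ≤ d x y + d y z)
    (htrans : ∀ x y z, d (x + z) (y + z) ≤ d x y + C₀) (a b c e : E) :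
    d (a + b) (c + e) ≤ d a c + d b e + 2 * C₀ := by
  have h₁ := htrans a c b
  have h₂ := htrans b e c
  rw [add_comm b c, add_comm e c] at h₂
  linarith [htri (a + b) (c + b) (c + e)]

theorem stmt2_general {E : Type*} [AddCommGroup E] (d : E → E → ℝ) (C₀ : ℝ)
    (hnonneg : ∀ x y, 0 ≤ d x y)
    (htri : ∀ x y z, d x z ≤ d x y + d y z)
    (htrans : ∀ x y z, d (x + z) (y + z) ≤ d x y + C₀) :
    ∀ x y : E, ∃ L : ℝ,
      Filter.Tendsto (fun n : ℕ => d (n • x) (n • y) / n) Filter.atTop (nhds L) ∧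
      L ≤ d x y + 2 * C₀ := by
  intro x y
  have hsub (m n : ℕ) :
      d ((m + n) • x) ((m + n) • y) ≤ d (m • x) (m • y) + d (n • x) (n • y) + 2 * C₀ := by
    simpa only [add_smul] using dist_add_add_le_of_add_right_le htri htrans _ _ _ _
  have hbdd : BddBelow (Set.range fun n : ℕ => d (n • x) (n • y) / n) :=
    ⟨0, by rintro _ ⟨n, rfl⟩; exact div_nonneg (hnonneg _ _) n.cast_nonneg⟩
  simpa only [one_smul] using exists_tendsto_div_of_add_le_add_add_const hsub hbdd

theorem stmt2 {E : Type*} [AddCommGroup E] (d : E → E → ℝ) (C₀ : ℝ) (hC₀ : 0 ≤ C₀)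
    (hnonneg : ∀ x y, 0 ≤ d x y)
    (hsymm : ∀ x y, d x y = d y x)
    (htri : ∀ x y z, d x z ≤ d x y + d y z)
    (htrans : ∀ x y z, d (x + z) (y + z) ≤ d x y + C₀) :
    ∀ x y : E, ∃ L : ℝ,
      Filter.Tendsto (fun n : ℕ => d (n • x) (n • y) / n) Filter.atTop (nhds L) ∧
      L ≤ d x y + 2 * C₀ :=
  stmt2_general d C₀ hnonneg htri htrans
end

section
/- Let (aₙ) be a sequence of real numbers with the weak sub-additivity property: for every C₁ > 1 there exists C₀ ≥ 0 such that for all q ≥ 2 and all m₁,…,m_q ≥ 0, a_{m₁+⋯+m_q} ≤ C₁·(a_{m₁}+⋯+a_{m_q}) + q·C₀. Then liminf_{n→∞} aₙ/n = limsup_{n→∞} aₙ/n. -/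
/-!
Fix `C₁ > 1` and `k ≥ 1`. Cutting `n` into `n / k` blocks of length `k` and a remainder of
length `< k` gives `a n / n ≤ C₁ a_k / k + C₀ / k + O(1 / n)`, so
`limsup a_n / n ≤ C₁ a_k / k + C₀ / k`. Choosing `k` large with `a_k / k` close to the liminf
kills the `C₀ / k` term, and letting `C₁ → 1` gives `limsup ≤ liminf`.
-/

open Filter Topology

def WeakSubadditive (a : ℕ → ℝ) (C₁ C₀ : ℝ) : Prop :=
  ∀ q : ℕ, 2 ≤ q → ∀ m : Fin q → ℕ, a (∑ i, m i) ≤ C₁ * ∑ i, a (m i) + q * C₀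

namespace WeakSubadditive

variable {a : ℕ → ℝ} {C₁ C₀ : ℝ}

theorem le_div_mod (h : WeakSubadditive a C₁ C₀) {k n : ℕ} (hk : 0 < k) (hkn : k ≤ n) :
    a n ≤ C₁ * ((n / k : ℕ) * a k + a (n % k)) + ((n / k : ℕ) + 1) * C₀ := by
  have hq : 1 ≤ n / k := (Nat.one_le_div_iff hk).2 hkn
  have := h (n / k + 1) (by omega) (Fin.cons (n % k) fun _ => k)
  rw [Fin.sum_cons, Fin.sum_univ_succ] at this
  simp only [Fin.cons_zero, Fin.cons_succ, Finset.sum_const, Finset.card_univ,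
    Fintype.card_fin, smul_eq_mul, nsmul_eq_mul] at this
  rw [Nat.add_comm, Nat.mul_comm, Nat.div_add_mod] at this
  push_cast at this
  linarith

theorem exists_eventually_div_le (h : WeakSubadditive a C₁ C₀) (hC₁ : 0 ≤ C₁) (hC₀ : 0 ≤ C₀)
    {k : ℕ} (hk : 0 < k) :
    ∃ D : ℝ, ∀ᶠ n : ℕ in atTop, a n / n ≤ C₁ * (a k / k) + C₀ / k + D / n := by
  obtain ⟨M, hM⟩ := ((Set.finite_Iio k).image a).bddAbove
  refine ⟨C₁ * (|a k| + M) + C₀, ?_⟩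
  filter_upwards [eventually_ge_atTop k] with n hkn
  have hkR : (0 : ℝ) < k := by exact_mod_cast hk
  have hnR : (0 : ℝ) < n := by exact_mod_cast hk.trans_le hkn
  set q := n / k
  have hrem : a (n % k) ≤ M := hM ⟨n % k, Nat.mod_lt n hk, rfl⟩
  have hqk : (q : ℝ) * k ≤ n := by exact_mod_cast Nat.div_mul_le_self n k
  have hnq : (n : ℝ) < q * k + k := by exact_mod_cast Nat.lt_div_mul_add hk
  have hblocks : q * a k ≤ n * (a k / k) + |a k| := by
    have : |q * a k - n * (a k / k)| ≤ |a k| := by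
      rw [show q * a k - n * (a k / k) = (q * k - n) / k * a k by field_simp, abs_mul]
      refine mul_le_of_le_one_left (abs_nonneg _) ?_
      rw [abs_div, abs_of_pos hkR, div_le_one hkR, abs_le]
      constructor <;> linarith
    linarith [le_abs_self (q * a k - n * (a k / k))]
  have hconst : q * C₀ ≤ n * (C₀ / k) := by
    rw [mul_div_assoc', le_div_iff₀ hkR]
    nlinarith
  have hmain := h.le_div_mod hk hkn
  rw [div_le_iff₀ hnR]
  have : (C₁ * (a k / k) + C₀ / k + (C₁ * (|a k| + M) + C₀) / n) * n
      = n * (C₁ * (a k / k) + C₀ / k) + (C₁ * (|a k| + M) + C₀) := by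
    field_simp
  rw [this]
  nlinarith [mul_le_mul_of_nonneg_left hblocks hC₁, mul_le_mul_of_nonneg_left hrem hC₁]

theorem limsup_div_le (h : WeakSubadditive a C₁ C₀) (hC₁ : 0 ≤ C₁) (hC₀ : 0 ≤ C₀)
    {k : ℕ} (hk : 0 < k) :
    limsup (fun n : ℕ => ((a n / n : ℝ) : EReal)) atTop ≤
      ((C₁ * (a k / k) + C₀ / k : ℝ) : EReal) := by
  obtain ⟨D, hD⟩ := h.exists_eventually_div_le hC₁ hC₀ hk
  have hlim : Tendsto (fun n : ℕ => ((C₁ * (a k / k) + C₀ / k + D / n : ℝ) : EReal)) atTop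
      (𝓝 ((C₁ * (a k / k) + C₀ / k : ℝ) : EReal)) := by
    refine EReal.tendsto_coe.2 ?_
    simpa using (tendsto_const_div_atTop_nhds_zero_nat D).const_add (C₁ * (a k / k) + C₀ / k)
  calc limsup (fun n : ℕ => ((a n / n : ℝ) : EReal)) atTop
      ≤ limsup (fun n : ℕ => ((C₁ * (a k / k) + C₀ / k + D / n : ℝ) : EReal)) atTop :=
        limsup_le_limsup (hD.mono fun n hn => EReal.coe_le_coe_iff.2 hn)
    _ = _ := hlim.limsup_eq

theorem limsup_div_le_of_liminf_lt (h : WeakSubadditive a C₁ C₀) (hC₁ : 1 < C₁) (hC₀ : 0 ≤ C₀)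
    {c : ℝ} (hc : liminf (fun n : ℕ => ((a n / n : ℝ) : EReal)) atTop < c) :
    limsup (fun n : ℕ => ((a n / n : ℝ) : EReal)) atTop ≤ ((C₁ * c + (C₁ - 1) : ℝ) : EReal) := by
  have hsmall : ∀ᶠ k : ℕ in atTop, C₀ / k ≤ C₁ - 1 :=
    (tendsto_const_div_atTop_nhds_zero_nat C₀).eventually (ge_mem_nhds (by linarith))
  obtain ⟨k, hkc, hkC₀, hk⟩ :=
    ((frequently_lt_of_liminf_lt (by isBoundedDefault) hc).and_eventually
      (hsmall.and (eventually_gt_atTop 0))).exists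
  refine (h.limsup_div_le (by linarith) hC₀ hk).trans (EReal.coe_le_coe_iff.2 ?_)
  have : a k / k < c := EReal.coe_lt_coe_iff.1 hkc
  nlinarith

end WeakSubadditive

theorem EReal.le_coe_of_forall_one_lt {x : EReal} {c : ℝ}
    (h : ∀ t : ℝ, 1 < t → x ≤ ((t * c + (t - 1) : ℝ) : EReal)) : x ≤ c := by
  have hlim : Tendsto (fun t : ℝ => ((t * c + (t - 1) : ℝ) : EReal)) (𝓝[>] 1) (𝓝 (c : EReal)) := by
    refine EReal.tendsto_coe.2 (tendsto_nhdsWithin_of_tendsto_nhds ?_)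
    have : Continuous fun t : ℝ => t * c + (t - 1) := by fun_prop
    simpa using this.tendsto 1
  exact ge_of_tendsto hlim (eventually_nhdsWithin_of_forall h)

theorem stmt3 (a : ℕ → ℝ)
    (hsub : ∀ C₁ : ℝ, 1 < C₁ → ∃ C₀ : ℝ, 0 ≤ C₀ ∧ ∀ (q : ℕ), 2 ≤ q →
      ∀ m : Fin q → ℕ, a (∑ i, m i) ≤ C₁ * ∑ i, a (m i) + q * C₀) :
    Filter.liminf (fun n : ℕ => ((a n / n : ℝ) : EReal)) Filter.atTop =
      Filter.limsup (fun n : ℕ => ((a n / n : ℝ) : EReal)) Filter.atTop := by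
  refine le_antisymm liminf_le_limsup (EReal.le_of_forall_lt_iff_le.1 fun c hc => ?_)
  refine EReal.le_coe_of_forall_one_lt fun C₁ hC₁ => ?_
  obtain ⟨C₀, hC₀, h⟩ := hsub C₁ hC₁
  exact WeakSubadditive.limsup_div_le_of_liminf_lt h hC₁ hC₀ hc
end

section
/- Let d be a C₀-translation invariant metric on a real vector space E, and δ(x,y) = lim_{n→∞} d(n•x, n•y)/n. Then for every positive integer p, δ(p•x, p•y) = p·δ(x,y), and consequently for every nonnegative rational r, δ(r·x, r·y) = r·δ(x,y). -/
open Filter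

theorem stmt6 {E : Type*} [AddCommGroup E] [Module ℝ E] (d : E → E → ℝ) (C₀ : ℝ) (hC₀ : 0 ≤ C₀)
    (hnonneg : ∀ x y, 0 ≤ d x y)
    (hsymm : ∀ x y, d x y = d y x)
    (htri : ∀ x y z, d x z ≤ d x y + d y z)
    (htrans : ∀ x y z, d (x + z) (y + z) ≤ d x y + C₀)
    (δ : E → E → ℝ)
    (hδ : ∀ x y, Filter.Tendsto (fun n : ℕ => d (n • x) (n • y) / n) Filter.atTop (nhds (δ x y))) :
    ∀ x y : E, (∀ p : ℕ, 0 < p → δ (p • x) (p • y) = p * δ x y) ∧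
      (∀ r : ℚ, 0 ≤ r → δ ((r : ℝ) • x) ((r : ℝ) • y) = r * δ x y) := by
  have hδ00 : δ 0 0 = 0 := by
    have h1 := hδ 0 0
    simp only [smul_zero] at h1
    have h2 : Tendsto (fun n : ℕ => d 0 0 / (n : ℝ)) atTop (nhds 0) :=
      tendsto_const_nhds.div_atTop tendsto_natCast_atTop_atTop
    exact tendsto_nhds_unique h1 h2
  have key : ∀ x y : E, ∀ p : ℕ, δ (p • x) (p • y) = p * δ x y := by
    intro x y p
    rcases Nat.eq_zero_or_pos p with hp | hp
    · simp [hp, hδ00]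
    · have hmono : Tendsto (fun n : ℕ => n * p) atTop atTop :=
        Filter.tendsto_atTop_atTop_of_monotone
          (fun a b h => Nat.mul_le_mul_right p h)
          (fun b => ⟨b, Nat.le_mul_of_pos_right b hp⟩)
      have h1 : Tendsto (fun n : ℕ => d ((n * p) • x) ((n * p) • y) / ((n * p : ℕ) : ℝ))
          atTop (nhds (δ x y)) := (hδ x y).comp hmono
      have h2 : Tendsto (fun n : ℕ => d (n • (p • x)) (n • (p • y)) / (n : ℝ))
          atTop (nhds ((p : ℝ) * δ x y)) := by
        apply Filter.Tendsto.congr _ (h1.const_mul (p : ℝ))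
        intro n
        rw [smul_smul, smul_smul]
        rcases Nat.eq_zero_or_pos n with hn | hn
        · simp [hn]
        · have hn' : (n : ℝ) ≠ 0 := Nat.cast_ne_zero.mpr hn.ne'
          have hp' : (p : ℝ) ≠ 0 := Nat.cast_ne_zero.mpr hp.ne'
          push_cast
          field_simp
      exact tendsto_nhds_unique (hδ (p • x) (p • y)) h2
  intro x y
  refine ⟨fun p _ => key x y p, fun r hr => ?_⟩
  set a := r.num.toNat with ha
  have hb : (0 : ℕ) < r.den := r.pos
  have hden : (r.den : ℝ) ≠ 0 := Nat.cast_ne_zero.mpr hb.ne'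
  have hbr : (r.den : ℝ) * (r : ℝ) = (a : ℝ) := by
    have hnum : ((a : ℤ) : ℝ) = (r.num : ℝ) := by
      rw [ha, Int.toNat_of_nonneg (Rat.num_nonneg.mpr hr)]
    rw [Rat.cast_def]
    push_cast at hnum ⊢
    rw [hnum]
    field_simp
  have h1 : r.den • ((r : ℝ) • x) = a • x := by
    rw [← Nat.cast_smul_eq_nsmul ℝ, ← Nat.cast_smul_eq_nsmul ℝ a, smul_smul, hbr]
  have h1y : r.den • ((r : ℝ) • y) = a • y := by
    rw [← Nat.cast_smul_eq_nsmul ℝ, ← Nat.cast_smul_eq_nsmul ℝ a, smul_smul, hbr]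
  have h2 := key ((r : ℝ) • x) ((r : ℝ) • y) r.den
  rw [h1, h1y, key x y a] at h2
  -- h2 : a * δ x y = den * δ(rx,ry)
  have hrval : (r : ℝ) = (a : ℝ) / (r.den : ℝ) := by
    field_simp
    linarith [hbr]
  rw [show (r : ℝ) * δ x y = (a : ℝ) / (r.den : ℝ) * δ x y from by rw [hrval]]
  field_simp
  linarith [h2]
end

section
/- Let d be a C₀-translation invariant and (C₁,C₂,C₃)-Lipschitz multiplicative metric on a real vector space E, and let δ₀(x,y) = lim_{n→∞} d(nx, ny)/n. Then the set E₀ = {x ∈ E : δ₀(x,0) = 0} is a linear subspace of E. -/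
/-! Translation invariance and the triangle inequality give
`d (n • (x + y)) 0 ≤ d (n • x) 0 + d (n • y) 0 + C₀`, and Lipschitz multiplicativity gives
`d (n • (c • x)) 0 ≤ C₁ |c| d (n • x) 0 + O(1)`. Dividing by `n` kills the additive constants, so
`x ↦ δ₀ x 0` is subadditive and satisfies `δ₀ (c • x) 0 ≤ C₁ |c| δ₀ x 0`; since it is also
nonnegative, its zero set is closed under addition and scalar multiplication. -/

open Filter Topology

lemma le_mul_of_tendsto_div_of_le_mul_add {a b : ℕ → ℝ} {α β K c : ℝ}
    (ha : Tendsto (fun n : ℕ => a n / n) atTop (𝓝 α))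
    (hb : Tendsto (fun n : ℕ => b n / n) atTop (𝓝 β))
    (hab : ∀ n, a n ≤ K * b n + c) : α ≤ K * β := by
  have hlim : Tendsto (fun n : ℕ => K * (b n / n) + c / n) atTop (𝓝 (K * β + 0)) :=
    (hb.const_mul K).add (tendsto_const_div_atTop_nhds_zero_nat c)
  rw [add_zero] at hlim
  refine le_of_tendsto_of_tendsto' ha hlim fun n => ?_
  rw [mul_div_assoc', ← add_div]
  exact div_le_div_of_nonneg_right (hab n) n.cast_nonneg

section

variable {E : Type*} [AddCommGroup E] {d : E → E → ℝ} {δ₀ : E → E → ℝ}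

lemma dist_add_zero_le {C₀ : ℝ} (htri : ∀ x y z, d x z ≤ d x y + d y z)
    (htrans : ∀ x y z, d (x + z) (y + z) ≤ d x y + C₀) (x y : E) :
    d (x + y) 0 ≤ d x 0 + d y 0 + C₀ := by
  have hx := htrans x 0 y
  rw [zero_add] at hx
  linarith [htri (x + y) y 0]

lemma dist_smul_zero_le [Module ℝ E] {C₁ C₂ C₃ : ℝ}
    (hmul : ∀ (l : ℝ) (x y : E), d (l • x) (l • y) ≤ C₁ * |l| * d x y + C₂ * |l| + C₃)
    (c : ℝ) (x : E) : d (c • x) 0 ≤ C₁ * |c| * d x 0 + (C₂ * |c| + C₃) := by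
  have h := hmul c x 0
  rw [smul_zero] at h
  linarith

lemma asymptotic_nonneg
    (hδ₀ : ∀ x, Tendsto (fun n : ℕ => d (n • x) 0 / n) atTop (𝓝 (δ₀ x 0)))
    (hnonneg : ∀ x y, 0 ≤ d x y) (x : E) : 0 ≤ δ₀ x 0 :=
  ge_of_tendsto' (hδ₀ x) fun n => div_nonneg (hnonneg _ _) n.cast_nonneg

lemma asymptotic_zero
    (hδ₀ : ∀ x, Tendsto (fun n : ℕ => d (n • x) 0 / n) atTop (𝓝 (δ₀ x 0))) :
    δ₀ (0 : E) 0 = 0 := by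
  refine tendsto_nhds_unique (hδ₀ 0) ?_
  simpa only [smul_zero] using tendsto_const_div_atTop_nhds_zero_nat (d 0 0)

lemma asymptotic_add_le
    (hδ₀ : ∀ x, Tendsto (fun n : ℕ => d (n • x) 0 / n) atTop (𝓝 (δ₀ x 0)))
    {C₀ : ℝ} (htri : ∀ x y z, d x z ≤ d x y + d y z)
    (htrans : ∀ x y z, d (x + z) (y + z) ≤ d x y + C₀) (x y : E) :
    δ₀ (x + y) 0 ≤ δ₀ x 0 + δ₀ y 0 := by
  have hsum : Tendsto (fun n : ℕ => (d (n • x) 0 + d (n • y) 0) / n) atTop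
      (𝓝 (δ₀ x 0 + δ₀ y 0)) := by
    simpa only [add_div] using (hδ₀ x).add (hδ₀ y)
  simpa only [one_mul] using le_mul_of_tendsto_div_of_le_mul_add (K := 1) (hδ₀ (x + y)) hsum
    fun n => by simpa only [smul_add, one_mul] using dist_add_zero_le htri htrans (n • x) (n • y)

lemma asymptotic_smul_le [Module ℝ E] {C₁ C₂ C₃ : ℝ}
    (hδ₀ : ∀ x, Tendsto (fun n : ℕ => d (n • x) 0 / n) atTop (𝓝 (δ₀ x 0)))
    (hmul : ∀ (l : ℝ) (x y : E), d (l • x) (l • y) ≤ C₁ * |l| * d x y + C₂ * |l| + C₃)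
    (c : ℝ) (x : E) : δ₀ (c • x) 0 ≤ C₁ * |c| * δ₀ x 0 :=
  le_mul_of_tendsto_div_of_le_mul_add (hδ₀ (c • x)) (hδ₀ x) fun n => by
    simpa only [smul_comm n c x] using dist_smul_zero_le hmul c (n • x)

end

theorem stmt7_general {E : Type*} [AddCommGroup E] [Module ℝ E] (d : E → E → ℝ)
    (C₀ C₁ C₂ C₃ : ℝ)
    (hnonneg : ∀ x y, 0 ≤ d x y)
    (htri : ∀ x y z, d x z ≤ d x y + d y z)
    (htrans : ∀ x y z, d (x + z) (y + z) ≤ d x y + C₀)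
    (hmul : ∀ (l : ℝ) (x y : E),
      C₁⁻¹ * |l| * d x y - C₂ * |l| - C₃ ≤ d (l • x) (l • y) ∧
      d (l • x) (l • y) ≤ C₁ * |l| * d x y + C₂ * |l| + C₃)
    (δ₀ : E → E → ℝ)
    (hδ₀ : ∀ x y, Filter.Tendsto (fun n : ℕ => d (n • x) (n • y) / n) Filter.atTop (nhds (δ₀ x y))) :
    ∃ S : Submodule ℝ E, (S : Set E) = {x : E | δ₀ x 0 = 0} := by
  have hδ : ∀ x, Tendsto (fun n : ℕ => d (n • x) 0 / n) atTop (𝓝 (δ₀ x 0)) := fun x => by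
    simpa only [smul_zero] using hδ₀ x 0
  have hnull : ∀ x, δ₀ x 0 ≤ 0 → δ₀ x 0 = 0 := fun x hx =>
    le_antisymm hx (asymptotic_nonneg hδ hnonneg x)
  refine ⟨{ carrier := {x | δ₀ x 0 = 0}
            zero_mem' := asymptotic_zero hδ
            add_mem' := ?_
            smul_mem' := ?_ }, rfl⟩
  · intro x y (hx : δ₀ x 0 = 0) (hy : δ₀ y 0 = 0)
    exact hnull _ (by linarith [asymptotic_add_le hδ htri htrans x y])
  · intro c x (hx : δ₀ x 0 = 0)
    exact hnull _ (by simpa [hx] using asymptotic_smul_le hδ (fun l x y => (hmul l x y).2) c x)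

theorem stmt7 {E : Type*} [AddCommGroup E] [Module ℝ E] (d : E → E → ℝ)
    (C₀ C₁ C₂ C₃ : ℝ) (hC₀ : 0 ≤ C₀) (hC₁ : 1 ≤ C₁) (hC₂ : 0 ≤ C₂) (hC₃ : 0 ≤ C₃)
    (hnonneg : ∀ x y, 0 ≤ d x y)
    (hsymm : ∀ x y, d x y = d y x)
    (htri : ∀ x y z, d x z ≤ d x y + d y z)
    (htrans : ∀ x y z, d (x + z) (y + z) ≤ d x y + C₀)
    (hmul : ∀ (l : ℝ) (x y : E),
      C₁⁻¹ * |l| * d x y - C₂ * |l| - C₃ ≤ d (l • x) (l • y) ∧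
      d (l • x) (l • y) ≤ C₁ * |l| * d x y + C₂ * |l| + C₃)
    (δ₀ : E → E → ℝ)
    (hδ₀ : ∀ x y, Filter.Tendsto (fun n : ℕ => d (n • x) (n • y) / n) Filter.atTop (nhds (δ₀ x y))) :
    ∃ S : Submodule ℝ E, (S : Set E) = {x : E | δ₀ x 0 = 0} :=
  stmt7_general d C₀ C₁ C₂ C₃ hnonneg htri htrans hmul δ₀ hδ₀
end

section
/- Under the hypotheses of the previous context, E₀ = {x ∈ E : δ₀(x,0) = 0} equals the maximal subspace of E on which d is bounded; i.e., x ∈ E₀ if and only if sup_{λ∈ℝ} d(λx, 0) < ∞. -/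
open Filter Topology

theorem stmt8 {E : Type*} [AddCommGroup E] [Module ℝ E] (d : E → E → ℝ)
    (C₀ C₁ C₂ C₃ : ℝ) (hC₀ : 0 ≤ C₀) (hC₁ : 1 ≤ C₁) (hC₂ : 0 ≤ C₂) (hC₃ : 0 ≤ C₃)
    (hnonneg : ∀ x y, 0 ≤ d x y)
    (hsymm : ∀ x y, d x y = d y x)
    (htri : ∀ x y z, d x z ≤ d x y + d y z)
    (htrans : ∀ x y z, d (x + z) (y + z) ≤ d x y + C₀)
    (hmul : ∀ (l : ℝ) (x y : E),
      C₁⁻¹ * |l| * d x y - C₂ * |l| - C₃ ≤ d (l • x) (l • y) ∧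
      d (l • x) (l • y) ≤ C₁ * |l| * d x y + C₂ * |l| + C₃)
    (δ₀ : E → E → ℝ)
    (hδ₀ : ∀ x y, Filter.Tendsto (fun n : ℕ => d (n • x) (n • y) / n) Filter.atTop (nhds (δ₀ x y))) :
    ∀ x : E, δ₀ x 0 = 0 ↔ ∃ M : ℝ, ∀ l : ℝ, d (l • x) 0 ≤ M := by
  have hC₁pos : (0:ℝ) < C₁ := lt_of_lt_of_le one_pos hC₁
  intro x
  constructor
  · intro h0
    -- key: for m ≥ 1, d (m • x) 0 ≤ C₁ * C₂
    have key : ∀ m : ℕ, 1 ≤ m → d (m • x) 0 ≤ C₁ * C₂ := by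
      intro m hm
      have hmpos : (0:ℝ) < m := by exact_mod_cast hm
      -- subsequence: d ((n*m) • x) 0 / (n*m) → 0
      have hx0 := hδ₀ x 0
      rw [h0] at hx0
      simp only [smul_zero] at hx0
      have hcomp : Tendsto (fun n : ℕ => n * m) atTop atTop :=
        Filter.tendsto_atTop_atTop.mpr fun b =>
          ⟨b, fun n hn => le_trans hn (Nat.le_mul_of_pos_right n hm)⟩
      have hsub : Tendsto (fun n : ℕ => d ((n * m) • x) 0 / (n * m)) atTop (𝓝 0) := by
        refine (hx0.comp hcomp).congr fun n => ?_
        simp [Function.comp, Nat.cast_mul]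
      -- δ₀ (m • x) 0 = 0
      have h1 : Tendsto (fun n : ℕ => d (n • (m • x)) 0 / n) atTop (𝓝 0) := by
        have := hsub.mul_const (m : ℝ)
        rw [zero_mul] at this
        refine this.congr fun n => ?_
        rcases Nat.eq_zero_or_pos n with rfl | hn
        · simp
        · have hn' : (0:ℝ) < n := by exact_mod_cast hn
          rw [smul_smul]
          push_cast
          field_simp
      have hδm : δ₀ (m • x) 0 = 0 := by
        have h2 := hδ₀ (m • x) 0
        simp only [smul_zero] at h2
        exact tendsto_nhds_unique h2 h1
      -- lower bound
      have hlow : ∀ n : ℕ, 1 ≤ n →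
          C₁⁻¹ * d (m • x) 0 - C₂ - C₃ / n ≤ d (n • (m • x)) 0 / n := by
        intro n hn
        have hn' : (0:ℝ) < n := by exact_mod_cast hn
        have h3 := (hmul (n : ℝ) (m • x) 0).1
        rw [Nat.cast_smul_eq_nsmul, smul_zero, abs_of_nonneg (le_of_lt hn')] at h3
        have : (C₁⁻¹ * n * d (m • x) 0 - C₂ * n - C₃) / n ≤ d (n • (m • x)) 0 / n := by
          gcongr
        calc C₁⁻¹ * d (m • x) 0 - C₂ - C₃ / n
            = (C₁⁻¹ * n * d (m • x) 0 - C₂ * n - C₃) / n := by field_simp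
          _ ≤ _ := this
      have hrhs : Tendsto (fun n : ℕ => C₁⁻¹ * d (m • x) 0 - C₂ - C₃ / n) atTop
          (𝓝 (C₁⁻¹ * d (m • x) 0 - C₂)) := by
        have := Tendsto.sub
          (tendsto_const_nhds : Tendsto (fun _ : ℕ => C₁⁻¹ * d (m • x) 0 - C₂) atTop
            (𝓝 (C₁⁻¹ * d (m • x) 0 - C₂)))
          (tendsto_const_div_atTop_nhds_zero_nat C₃)
        simpa using this
      have hle : C₁⁻¹ * d (m • x) 0 - C₂ ≤ 0 := by
        have h1' : δ₀ (m • x) 0 = 0 := hδm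
        have h2 := hδ₀ (m • x) 0
        simp only [smul_zero] at h2
        rw [h1'] at h2
        refine le_of_tendsto_of_tendsto hrhs h2 ?_
        filter_upwards [eventually_ge_atTop 1] with n hn using hlow n hn
      have hinv : C₁ * C₁⁻¹ = 1 := mul_inv_cancel₀ (ne_of_gt hC₁pos)
      nlinarith [hnonneg (m • x) 0, hinv, mul_le_mul_of_nonneg_left hle hC₁pos.le]
    -- general real l
    refine ⟨C₁ * (C₁ * C₂) + C₂ + C₃, fun l => ?_⟩
    set n : ℕ := max 1 ⌈|l|⌉₊ with hn
    have hn1 : 1 ≤ n := le_max_left _ _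
    have hnR : (0:ℝ) < n := by exact_mod_cast hn1
    have habs : |l| ≤ n := by
      refine le_trans (Nat.le_ceil |l|) ?_
      exact_mod_cast le_max_right 1 ⌈|l|⌉₊
    have hxeq : l • x = (l / n) • (n • x) := by
      rw [← Nat.cast_smul_eq_nsmul ℝ, smul_smul, div_mul_cancel₀]
      exact ne_of_gt hnR
    have h4 := (hmul (l / n) (n • x) 0).2
    rw [smul_zero] at h4
    have habs2 : |l / n| ≤ 1 := by
      rw [abs_div, abs_of_nonneg (le_of_lt hnR)]
      exact div_le_one_of_le₀ habs (le_of_lt hnR)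
    have hd := key n hn1
    rw [hxeq]
    have hdn : 0 ≤ d (n • x) 0 := hnonneg _ _
    have habs3 : 0 ≤ |l / n| := abs_nonneg _
    nlinarith [h4, mul_le_mul_of_nonneg_left (mul_le_mul habs2 hd hdn zero_le_one) hC₁pos.le,
      mul_le_mul_of_nonneg_left habs2 hC₂]
  · rintro ⟨M, hM⟩
    have h1 : Tendsto (fun n : ℕ => d (n • x) 0 / n) atTop (𝓝 0) := by
      refine squeeze_zero (fun n => div_nonneg (hnonneg _ _) n.cast_nonneg)
        (fun n => ?_) (tendsto_const_div_atTop_nhds_zero_nat M)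
      rcases Nat.eq_zero_or_pos n with rfl | hn
      · simp
      · have hn' : (0:ℝ) < n := by exact_mod_cast hn
        have := hM (n : ℝ)
        rw [Nat.cast_smul_eq_nsmul] at this
        exact div_le_div_of_nonneg_right this hn'.le
    have h2 := hδ₀ x 0
    simp only [smul_zero] at h2
    exact tendsto_nhds_unique h2 h1
end

section
/- Let d be a C₀-translation invariant, (C₁,C₂,C₃)-Lipschitz multiplicative metric on a real vector space E, and δ₀(x,y) = lim d(nx,ny)/n. Then δ₀ is (C₁, C₂+C₃)-Lipschitz equivalent to d: C₁⁻¹ d(x,y) − (C₂+C₃) ≤ δ₀(x,y) ≤ C₁ d(x,y) + (C₂+C₃) for all x,y ∈ E. -/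
theorem stmt11 {E : Type*} [AddCommGroup E] [Module ℝ E] (d : E → E → ℝ)
    (C₀ C₁ C₂ C₃ : ℝ) (hC₀ : 0 ≤ C₀) (hC₁ : 1 ≤ C₁) (hC₂ : 0 ≤ C₂) (hC₃ : 0 ≤ C₃)
    (hnonneg : ∀ x y, 0 ≤ d x y)
    (hsymm : ∀ x y, d x y = d y x)
    (htri : ∀ x y z, d x z ≤ d x y + d y z)
    (htrans : ∀ x y z, d (x + z) (y + z) ≤ d x y + C₀)
    (hmul : ∀ (l : ℝ) (x y : E),
      C₁⁻¹ * |l| * d x y - C₂ * |l| - C₃ ≤ d (l • x) (l • y) ∧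
      d (l • x) (l • y) ≤ C₁ * |l| * d x y + C₂ * |l| + C₃)
    (δ₀ : E → E → ℝ)
    (hδ₀ : ∀ x y,
      Filter.Tendsto (fun n : ℕ => d (n • x) (n • y) / n) Filter.atTop (nhds (δ₀ x y))) :
    ∀ x y : E, C₁⁻¹ * d x y - (C₂ + C₃) ≤ δ₀ x y ∧ δ₀ x y ≤ C₁ * d x y + (C₂ + C₃) := by
  intro x y
  have key : ∀ n : ℕ, 1 ≤ n →
      (C₁⁻¹ * d x y - C₂ - C₃ / n ≤ d (n • x) (n • y) / n ∧
       d (n • x) (n • y) / n ≤ C₁ * d x y + C₂ + C₃ / n) := by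
    intro n hn
    have hn' : (0:ℝ) < n := by exact_mod_cast hn
    have h := hmul (n : ℝ) x y
    simp only [Nat.cast_smul_eq_nsmul] at h; rw [abs_of_nonneg hn'.le] at h
    constructor
    · rw [← sub_nonneg]
      have : d (n • x) (n • y) / ↑n - (C₁⁻¹ * d x y - C₂ - C₃ / ↑n)
          = (d (n • x) (n • y) - (C₁⁻¹ * ↑n * d x y - C₂ * ↑n - C₃)) / n := by
        field_simp
      rw [this]
      exact div_nonneg (by linarith [h.1]) hn'.le
    · rw [← sub_nonneg]
      have : (C₁ * d x y + C₂ + C₃ / ↑n) - d (n • x) (n • y) / ↑n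
          = ((C₁ * ↑n * d x y + C₂ * ↑n + C₃) - d (n • x) (n • y)) / n := by
        field_simp
      rw [this]
      exact div_nonneg (by linarith [h.2]) hn'.le
  have hdiv : Filter.Tendsto (fun n : ℕ => C₃ / (n:ℝ)) Filter.atTop (nhds 0) :=
    tendsto_const_div_atTop_nhds_zero_nat C₃
  constructor
  · have hlo : Filter.Tendsto (fun n : ℕ => C₁⁻¹ * d x y - C₂ - C₃ / n) Filter.atTop
        (nhds (C₁⁻¹ * d x y - C₂ - 0)) :=
      (tendsto_const_nhds.sub tendsto_const_nhds).sub hdiv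
    have := le_of_tendsto_of_tendsto hlo (hδ₀ x y)
      (Filter.eventually_atTop.2 ⟨1, fun n hn => (key n hn).1⟩)
    linarith
  · have hhi : Filter.Tendsto (fun n : ℕ => C₁ * d x y + C₂ + C₃ / n) Filter.atTop
        (nhds (C₁ * d x y + C₂ + 0)) :=
      (tendsto_const_nhds.add tendsto_const_nhds).add hdiv
    have := le_of_tendsto_of_tendsto (hδ₀ x y) hhi
      (Filter.eventually_atTop.2 ⟨1, fun n hn => (key n hn).2⟩)
    linarith
end

section
/- Let d be a metric on an abelian group E satisfying: for every C₁ > 1 there exists C₀ ≥ 0 such that for all q ≥ 2 and all x₁,…,x_q, y₁,…,y_q ∈ E, d(x₁+⋯+x_q, y₁+⋯+y_q) ≤ C₁·Σᵢ d(xᵢ,yᵢ) + q·C₀. Then for all x,y ∈ E the limit δ(x,y) = lim_{n→∞} d(n•x, n•y)/n exists (as a real number). -/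
/-!
Write `u n = d (n • x) (n • y) / n`. Splitting `m = q n + r` with `r < n` and applying the
hypothesis to `q` copies of `n • x` and `r` copies of `x` gives, for every `C₁ > 1`,
`u m ≤ C₁ u n + C₀ / n + O(n / m)`. Letting `m → ∞`, then taking `n` large with `u n` close to
`liminf u`, yields `limsup u ≤ C₁ liminf u`; letting `C₁ → 1` gives convergence.
-/

open Filter Topology

theorem exists_tendsto_of_eventually_le_mul_add {α : Type*} {l : Filter α} [l.NeBot]
    {u : α → ℝ}
    (hbdd : IsBoundedUnder (· ≥ ·) l u)
    (h : ∀ c > 1, ∀ ε > 0, ∀ᶠ n in l, ∀ᶠ m in l, u m ≤ c * u n + ε) :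
    ∃ L, Tendsto u l (𝓝 L) := by
  obtain ⟨n, hn⟩ := (h 2 one_lt_two 1 one_pos).exists
  have hub : IsBoundedUnder (· ≤ ·) l u := isBoundedUnder_of_eventually_le hn
  have hmul : ∀ c > 1, ∀ ε > 0, limsup u l ≤ c * liminf u l + ε := by
    intro c hc ε hε
    have hc0 : 0 < c := by linarith
    have hlower : ∀ᶠ n in l, (limsup u l - ε) / c ≤ u n := by
      filter_upwards [h c hc ε hε] with n hn
      rw [div_le_iff₀ hc0]
      linarith [limsup_le_of_le hbdd.isCoboundedUnder_le hn]
    have := le_liminf_of_le hub.isCoboundedUnder_ge hlower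
    rw [div_le_iff₀ hc0] at this
    linarith
  have hle : limsup u l ≤ liminf u l := by
    have hlim : Tendsto (fun t : ℝ => (1 + t) * liminf u l + t) (𝓝[>] 0) (𝓝 (liminf u l)) :=
      tendsto_nhdsWithin_of_tendsto_nhds <|
        (by fun_prop : Continuous fun t : ℝ => (1 + t) * liminf u l + t).tendsto' 0 _ (by simp)
    refine ge_of_tendsto hlim (eventually_nhdsWithin_of_forall fun t (ht : 0 < t) => ?_)
    exact hmul _ (by linarith) _ ht
  exact ⟨_, tendsto_of_liminf_eq_limsup (le_antisymm (liminf_le_limsup hub hbdd) hle) rfl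
    hub hbdd⟩

theorem eventually_div_le_of_block_le {a : ℕ → ℝ} (ha : ∀ n, 0 ≤ a n) {C₁ C₀ : ℝ}
    (hC₁ : 0 ≤ C₁) (hC₀ : 0 ≤ C₀)
    (hblock : ∀ n q r : ℕ, 2 ≤ q →
      a (q * n + r) ≤ C₁ * (q * a n + r * a 1) + (q + r) * C₀)
    {n : ℕ} (hn : 0 < n) {δ : ℝ} (hδ : 0 < δ) :
    ∀ᶠ m : ℕ in atTop, a m / m ≤ C₁ * (a n / n) + C₀ / n + δ := by
  set X := C₁ * a n + C₀
  set Y := C₁ * a 1 + C₀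
  have hX : 0 ≤ X := by have := ha n; positivity
  have hY : 0 ≤ Y := by have := ha 1; positivity
  filter_upwards [eventually_ge_atTop (2 * n),
    (tendsto_const_div_atTop_nhds_zero_nat (n * Y)).eventually_lt_const hδ] with m hm hYm
  obtain ⟨q, r, hq, hr, rfl⟩ : ∃ q r, 2 ≤ q ∧ r < n ∧ q * n + r = m :=
    ⟨m / n, m % n, (Nat.le_div_iff_mul_le hn).2 hm, Nat.mod_lt _ hn,
      by rw [mul_comm]; exact Nat.div_add_mod m n⟩
  have hm0 : (0 : ℝ) < ↑(q * n + r) := by norm_cast; omega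
  have hqn : (q : ℝ) * n / ↑(q * n + r) ≤ 1 := by
    rw [div_le_one hm0]; norm_cast; omega
  calc a (q * n + r) / ↑(q * n + r) ≤ (q * X + r * Y) / ↑(q * n + r) := by
        gcongr; exact (hblock n q r hq).trans_eq (by ring)
    _ = q * n / ↑(q * n + r) * (X / n) + r * Y / ↑(q * n + r) := by
        field_simp
    _ ≤ 1 * (X / n) + n * Y / ↑(q * n + r) := by
        gcongr
    _ ≤ C₁ * (a n / n) + C₀ / n + δ := by
        rw [one_mul]; linarith [show X / n = C₁ * (a n / n) + C₀ / n by ring]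

theorem apply_nsmul_mul_add_le {E : Type*} [AddCommMonoid E] (d : E → E → ℝ) {C₁ C₀ : ℝ}
    (H : ∀ q : ℕ, 2 ≤ q → ∀ x y : Fin q → E,
      d (∑ i, x i) (∑ i, y i) ≤ C₁ * ∑ i, d (x i) (y i) + q * C₀)
    (x y : E) (n : ℕ) {q : ℕ} (hq : 2 ≤ q) (r : ℕ) :
    d ((q * n + r) • x) ((q * n + r) • y) ≤
      C₁ * (q * d (n • x) (n • y) + r * d x y) + (q + r) * C₀ := by
  have hsum (z : E) :
      ∑ i, Fin.append (fun _ : Fin q => n • z) (fun _ : Fin r => z) i = (q * n + r) • z := by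
    simp [Fin.sum_univ_add, add_smul, mul_smul]
  have := H (q + r) (by omega) (Fin.append (fun _ => n • x) (fun _ => x))
    (Fin.append (fun _ => n • y) (fun _ => y))
  rw [hsum, hsum] at this
  simpa [Fin.sum_univ_add] using this

theorem stmt15_general {E : Type*} [AddCommGroup E] (d : E → E → ℝ)
    (hnonneg : ∀ x y, 0 ≤ d x y)
    (hsub : ∀ C₁ : ℝ, 1 < C₁ → ∃ C₀ : ℝ, 0 ≤ C₀ ∧ ∀ (q : ℕ), 2 ≤ q → ∀ x y : Fin q → E,
      d (∑ i, x i) (∑ i, y i) ≤ C₁ * ∑ i, d (x i) (y i) + q * C₀) :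
    ∀ x y : E, ∃ L : ℝ,
      Filter.Tendsto (fun n : ℕ => d (n • x) (n • y) / n) Filter.atTop (nhds L) := by
  intro x y
  refine exists_tendsto_of_eventually_le_mul_add
    (isBoundedUnder_of ⟨0, fun n => div_nonneg (hnonneg _ _) n.cast_nonneg⟩)
    fun c hc ε hε => ?_
  obtain ⟨C₀, hC₀, H⟩ := hsub c hc
  set a : ℕ → ℝ := fun n => d (n • x) (n • y)
  have hblock (n q r : ℕ) (hq : 2 ≤ q) :
      a (q * n + r) ≤ c * (q * a n + r * a 1) + (q + r) * C₀ := by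
    simpa [a] using apply_nsmul_mul_add_le d H x y n hq r
  filter_upwards [(tendsto_const_div_atTop_nhds_zero_nat C₀).eventually_lt_const (half_pos hε),
    eventually_gt_atTop 0] with n hC₀n hn
  filter_upwards [eventually_div_le_of_block_le (fun n => hnonneg (n • x) (n • y)) (by linarith)
    hC₀ hblock hn (half_pos hε)] with m hm
  linarith

theorem stmt15 {E : Type*} [AddCommGroup E] (d : E → E → ℝ)
    (hnonneg : ∀ x y, 0 ≤ d x y)
    (hsymm : ∀ x y, d x y = d y x)
    (htri : ∀ x y z, d x z ≤ d x y + d y z)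
    (hsub : ∀ C₁ : ℝ, 1 < C₁ → ∃ C₀ : ℝ, 0 ≤ C₀ ∧ ∀ (q : ℕ), 2 ≤ q → ∀ x y : Fin q → E,
      d (∑ i, x i) (∑ i, y i) ≤ C₁ * ∑ i, d (x i) (y i) + q * C₀) :
    ∀ x y : E, ∃ L : ℝ,
      Filter.Tendsto (fun n : ℕ => d (n • x) (n • y) / n) Filter.atTop (nhds L) :=
  stmt15_general d hnonneg hsub
end
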